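/- (Lemma 7.2, existence and uniqueness of the monodromy filtration) Let 𝒜 be an abelian category, A an object of 𝒜, and N : A → A a nilpotent endomorphism. Then there exists a unique finite increasing filtration (Fil_i A)_{i ∈ ℤ} of A compatible with N (i.e. for every i the composite Fil_i A ↪ A →N→ A factors through Fil_{i−2} A ↪ A) such that for every i ≥ 0 the morphism Gr_i A → Gr_{−i} A induced by the i-th power N^i is an isomorphism. -/

import Mathlib

open CategoryTheory CategoryTheory.Limits

/-- The `n`-th iterate of an endomorphism `N : A ⟶ A`. -/
def endoPow {C : Type*} [Category C] {A : C} (N : A ⟶ A) : ℕ → (A ⟶ A)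
  | 0 => 𝟙 A
  | n + 1 => endoPow N n ≫ N


/-- A family `F : ℤ → Subobject A` is a finite increasing filtration if it is monotone,
eventually `⊥` for small indices and eventually `⊤` for large indices. -/
def IsFiniteFiltration {C : Type*} [Category C] [Abelian C] {A : C}
    (F : ℤ → Subobject A) : Prop :=
  Monotone F ∧ (∃ a : ℤ, ∀ i ≤ a, F i = ⊥) ∧ (∃ b : ℤ, ∀ i ≥ b, F i = ⊤)

/-- A filtration is compatible with `N` if for every `i` the composite
`Fil_i A ↪ A ⟶[N] A` factors through `Fil_{i-2} A ↪ A`. -/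
def FiltrationCompatible {C : Type*} [Category C] [Abelian C] {A : C}
    (F : ℤ → Subobject A) (N : A ⟶ A) : Prop :=
  ∀ i : ℤ, (F (i - 2)).Factors ((F i).arrow ≫ N)

/-- `F` is a monodromy filtration for the nilpotent endomorphism `N` of `A`:
a finite increasing filtration compatible with `N` such that for every `i ≥ 0`, the morphism
`Gr_i A ⟶ Gr_{-i} A` induced by `N^i` is an isomorphism.  Here
`Gr_i A = Fil_i A / Fil_{i-1} A` is realized as the cokernel of `Fil_{i-1} A ⟶ Fil_i A`, and the
morphism induced by `N^i` is `cokernel.desc` of the (unique) lift `g` of `N^i` to the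
subobjects. -/
def IsMonodromyFiltration {C : Type*} [Category C] [Abelian C] {A : C}
    (N : A ⟶ A) (F : ℤ → Subobject A) : Prop :=
  IsFiniteFiltration F ∧ FiltrationCompatible F N ∧
  ∀ i : ℕ,
    ∀ (g : ((F (i : ℤ) : C)) ⟶ ((F (-(i : ℤ)) : C)))
      (_ : g ≫ (F (-(i : ℤ))).arrow = (F (i : ℤ)).arrow ≫ endoPow N i)
      (hi : F ((i : ℤ) - 1) ≤ F (i : ℤ)) (hi' : F (-(i : ℤ) - 1) ≤ F (-(i : ℤ)))
      (w : Subobject.ofLE (F ((i : ℤ) - 1)) (F (i : ℤ)) hi ≫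
          (g ≫ cokernel.π (Subobject.ofLE (F (-(i : ℤ) - 1)) (F (-(i : ℤ))) hi')) = 0),
      IsIso (cokernel.desc (Subobject.ofLE (F ((i : ℤ) - 1)) (F (i : ℤ)) hi)
        (g ≫ cokernel.π (Subobject.ofLE (F (-(i : ℤ) - 1)) (F (-(i : ℤ))) hi')) w)

set_option linter.unusedSectionVars false
set_option linter.unnecessarySimpa false
set_option maxHeartbeats 1000000

namespace MonodromyAux

variable {C : Type*} [Category C] [Abelian C] {A : C}

theorem factors_of_comm {T : C} {P : Subobject A} {x : T ⟶ A} (u : T ⟶ (P : C))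
    (hu : u ≫ P.arrow = x) : P.Factors x := hu ▸ Subobject.factors_comp_arrow u

/-- Epi descent for `Subobject.Factors`. -/
theorem factors_of_epi_comp (P : Subobject A) {T T' : C} (π : T' ⟶ T) [Epi π] {x : T ⟶ A}
    (h : P.Factors (π ≫ x)) : P.Factors x := by
  have : StrongEpi π := strongEpi_of_epi π
  have w : P.factorThru (π ≫ x) h ≫ P.arrow = π ≫ x := P.factorThru_arrow _ _
  have sq : CommSq (P.factorThru (π ≫ x) h) π P.arrow x := ⟨by simpa using w⟩
  exact factors_of_comm sq.lift sq.fac_right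

theorem le_of_forall_factors {P Q : Subobject A}
    (h : ∀ (T : C) (x : T ⟶ A), P.Factors x → Q.Factors x) : P ≤ Q := by
  have hf := h _ P.arrow P.factors_self
  exact Subobject.le_of_comm (Q.factorThru _ hf) (Q.factorThru_arrow _ _)

theorem factors_sub {T : C} {P : Subobject A} {x y : T ⟶ A} (hx : P.Factors x)
    (hy : P.Factors y) : P.Factors (x - y) :=
  factors_of_comm (P.factorThru x hx - P.factorThru y hy) (by simp)

theorem factors_sum {T : C} {P : Subobject A} {ι : Type*} (s : Finset ι) (f : ι → (T ⟶ A))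
    (h : ∀ i ∈ s, P.Factors (f i)) : P.Factors (∑ i ∈ s, f i) := by
  classical
  induction s using Finset.induction with
  | empty => simpa using P.factors_zero
  | @insert a s hni ih =>
    rw [Finset.sum_insert hni]
    exact Subobject.factors_add _ _ (h _ (Finset.mem_insert_self _ _))
      (ih fun i hi => h i (Finset.mem_insert_of_mem hi))

/-- Lift a morphism through an epimorphism, after refinement. -/
theorem exists_lift_of_epi {X Y T : C} (e : X ⟶ Y) [Epi e] (t : T ⟶ Y) :
    ∃ (T' : C) (π : T' ⟶ T) (_ : Epi π) (w : T' ⟶ X), w ≫ e = π ≫ t :=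
  ⟨pullback t e, pullback.fst t e, inferInstance, pullback.snd t e, pullback.condition.symm⟩

theorem factors_sup_elim {S T : Subobject A} {X : C} {x : X ⟶ A} (h : (S ⊔ T).Factors x) :
    ∃ (X' : C) (π : X' ⟶ X) (_ : Epi π) (u v : X' ⟶ A),
      π ≫ x = u + v ∧ S.Factors u ∧ T.Factors v := by
  set f : (S : C) ⊞ (T : C) ⟶ A := biprod.desc S.arrow T.arrow with hf
  have hS : S ≤ imageSubobject f :=
    Subobject.le_of_comm (biprod.inl ≫ factorThruImageSubobject f) (by simp [hf])
  have hT : T ≤ imageSubobject f :=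
    Subobject.le_of_comm (biprod.inr ≫ factorThruImageSubobject f) (by simp [hf])
  have hx : (imageSubobject f).Factors x := Subobject.factors_of_le x (sup_le hS hT) h
  have : Epi (factorThruImageSubobject f) := by
    dsimp [factorThruImageSubobject]; infer_instance
  obtain ⟨X', π, hπ, w, hw⟩ := exists_lift_of_epi (factorThruImageSubobject f)
    ((imageSubobject f).factorThru x hx)
  refine ⟨X', π, hπ, (w ≫ biprod.fst) ≫ S.arrow, (w ≫ biprod.snd) ≫ T.arrow, ?_,
    Subobject.factors_comp_arrow _, Subobject.factors_comp_arrow _⟩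
  have hwf : π ≫ x = w ≫ f := by
    rw [← (imageSubobject f).factorThru_arrow x hx, ← Category.assoc, ← hw, Category.assoc,
      imageSubobject_arrow_comp]
  have hdesc : f = biprod.fst ≫ S.arrow + biprod.snd ≫ T.arrow := by
    rw [hf]; ext <;> simp
  rw [hwf, hdesc, Preadditive.comp_add, ← Category.assoc, ← Category.assoc]

theorem factors_image_elim {X T : C} (f : X ⟶ A) {x : T ⟶ A}
    (h : (imageSubobject f).Factors x) :
    ∃ (T' : C) (π : T' ⟶ T) (_ : Epi π) (y : T' ⟶ X), π ≫ x = y ≫ f := by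
  have : Epi (factorThruImageSubobject f) := by
    dsimp [factorThruImageSubobject]; infer_instance
  obtain ⟨T', π, hπ, w, hw⟩ := exists_lift_of_epi (factorThruImageSubobject f)
    ((imageSubobject f).factorThru x h)
  refine ⟨T', π, hπ, w, ?_⟩
  rw [← (imageSubobject f).factorThru_arrow x h, ← Category.assoc, ← hw, Category.assoc,
    imageSubobject_arrow_comp]

theorem comp_cokernelπ_eq_zero_elim {X Y T : C} {f : X ⟶ Y} {t : T ⟶ Y}
    (h : t ≫ cokernel.π f = 0) :
    ∃ (T' : C) (π : T' ⟶ T) (_ : Epi π) (w : T' ⟶ X), π ≫ t = w ≫ f := by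
  set u : T ⟶ Abelian.image f := kernel.lift (cokernel.π f) t h with hu
  obtain ⟨T', π, hπ, w, hw⟩ := exists_lift_of_epi (Abelian.factorThruImage f) u
  refine ⟨T', π, hπ, w, ?_⟩
  have : π ≫ u ≫ Abelian.image.ι f = π ≫ t := by rw [hu]; simp [Abelian.image.ι]
  rw [← this, ← Category.assoc, ← hw, Category.assoc, Abelian.image.fac]

theorem endoPow_add (N : A ⟶ A) (a b : ℕ) :
    endoPow N (a + b) = endoPow N a ≫ endoPow N b := by
  induction b with
  | zero => simp [endoPow]
  | succ b ih => rw [← Nat.add_assoc, endoPow, endoPow, ih, Category.assoc]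

theorem endoPow_eq_zero_of_le {N : A ⟶ A} {r : ℕ} (hr : endoPow N r = 0) {m : ℕ}
    (hm : r ≤ m) : endoPow N m = 0 := by
  obtain ⟨c, rfl⟩ := Nat.exists_eq_add_of_le hm
  rw [endoPow_add, hr, zero_comp]

theorem comp_endoPow_zero {N : A ⟶ A} {T : C} {y : T ⟶ A} {a : ℕ}
    (h : y ≫ endoPow N a = 0) {b : ℕ} (hab : a ≤ b) : y ≫ endoPow N b = 0 := by
  obtain ⟨c, rfl⟩ := Nat.exists_eq_add_of_le hab
  rw [endoPow_add, ← Category.assoc, h, zero_comp]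

/-- The `j`-th term of the candidate monodromy filtration in degree `k`:
`N^j (ker N^{(k+j) + j + 1})`. -/
noncomputable def wterm (N : A ⟶ A) (k : ℤ) (j : ℕ) : Subobject A :=
  if 0 ≤ k + j then
    imageSubobject ((kernelSubobject (endoPow N ((k + j).toNat + j + 1))).arrow ≫ endoPow N j)
  else ⊥

/-- The candidate monodromy filtration. -/
noncomputable def wfil (N : A ⟶ A) (r : ℕ) (k : ℤ) : Subobject A :=
  (Finset.range r).sup (wterm N k)

theorem wfil_intro (N : A ⟶ A) {r : ℕ} {k : ℤ} {j : ℕ} (hj : j < r) (hkj : 0 ≤ k + j)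
    {T : C} {y : T ⟶ A} {m : ℕ} (hy : y ≫ endoPow N m = 0)
    (hm : m ≤ (k + j).toNat + j + 1) :
    (wfil N r k).Factors (y ≫ endoPow N j) := by
  have hy' : y ≫ endoPow N ((k + j).toNat + j + 1) = 0 := comp_endoPow_zero hy hm
  have h1 : (kernelSubobject (endoPow N ((k + j).toNat + j + 1))).Factors y :=
    kernelSubobject_factors _ _ hy'
  have h2 : (wterm N k j).Factors (y ≫ endoPow N j) := by
    rw [wterm, if_pos hkj]
    have := imageSubobject_factors_comp_self
      ((kernelSubobject (endoPow N ((k + j).toNat + j + 1))).arrow ≫ endoPow N j)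
      ((kernelSubobject (endoPow N ((k + j).toNat + j + 1))).factorThru y h1)
    simpa [Category.assoc, Subobject.factorThru_arrow] using this
  exact Subobject.factors_of_le _ (Finset.le_sup (Finset.mem_range.2 hj)) h2

theorem wsup_elim (N : A ⟶ A) (k : ℤ) (s : Finset ℕ) {T : C} {x : T ⟶ A}
    (h : (s.sup (wterm N k)).Factors x) :
    ∃ (T' : C) (π : T' ⟶ T) (_ : Epi π) (y : ℕ → (T' ⟶ A)),
      π ≫ x = ∑ j ∈ s, y j ≫ endoPow N j ∧
      (∀ j : ℕ, y j ≫ endoPow N ((k + (j:ℤ)).toNat + j + 1) = 0) ∧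
      (∀ j : ℕ, ¬ 0 ≤ k + (j : ℤ) → y j = 0) := by
  classical
  induction s using Finset.induction generalizing T with
  | empty =>
    refine ⟨T, 𝟙 T, inferInstance, fun _ => 0, ?_, fun j => zero_comp, fun j _ => rfl⟩
    have hx : x = 0 := (Subobject.bot_factors_iff_zero x).1 (by simpa using h)
    simp [hx]
  | @insert a s ha ih =>
    rw [Finset.sup_insert] at h
    obtain ⟨X₁, π₁, hπ₁, u, v, huv, hu, hv⟩ := factors_sup_elim h
    -- eliminate the `wterm` membership of `u`
    have hterm : ∃ (X₂ : C) (σ : X₂ ⟶ X₁) (_ : Epi σ) (ya : X₂ ⟶ A),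
        σ ≫ u = ya ≫ endoPow N a ∧ ya ≫ endoPow N ((k + a).toNat + a + 1) = 0 ∧
        (¬ 0 ≤ k + (a : ℤ) → ya = 0) := by
      by_cases hka : 0 ≤ k + (a : ℤ)
      · rw [wterm, if_pos hka] at hu
        obtain ⟨X₂, σ, hσ, z, hz⟩ := factors_image_elim _ hu
        refine ⟨X₂, σ, hσ, z ≫ (kernelSubobject _).arrow, by
          simpa [Category.assoc] using hz, ?_, fun hn => absurd hka hn⟩
        simp [Category.assoc, kernelSubobject_arrow_comp]
      · rw [wterm, if_neg hka] at hu
        have hu0 : u = 0 := (Subobject.bot_factors_iff_zero u).1 hu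
        exact ⟨X₁, 𝟙 X₁, inferInstance, 0, by simp [hu0], zero_comp, fun _ => rfl⟩
    obtain ⟨X₂, σ, hσ, ya, hya, hyaker, hyaneg⟩ := hterm
    have hv' : (s.sup (wterm N k)).Factors (σ ≫ v) := Subobject.factors_of_factors_right _ hv
    obtain ⟨X₃, π₂, hπ₂, y', hy'sum, hy'ker, hy'neg⟩ := ih hv'
    refine ⟨X₃, π₂ ≫ σ ≫ π₁, inferInstance, fun j => if j = a then π₂ ≫ ya else y' j,
      ?_, ?_, ?_⟩
    · dsimp only
      rw [Finset.sum_insert ha, if_pos rfl]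
      have : ∀ j ∈ s, (if j = a then π₂ ≫ ya else y' j) ≫ endoPow N j = y' j ≫ endoPow N j := by
        intro j hj
        rw [if_neg (by rintro rfl; exact ha hj)]
      rw [Finset.sum_congr rfl this]
      calc (π₂ ≫ σ ≫ π₁) ≫ x = π₂ ≫ σ ≫ (π₁ ≫ x) := by simp [Category.assoc]
        _ = π₂ ≫ (σ ≫ u) + π₂ ≫ σ ≫ v := by
            rw [huv]; simp [Preadditive.comp_add, Category.assoc]
        _ = (π₂ ≫ ya) ≫ endoPow N a + ∑ j ∈ s, y' j ≫ endoPow N j := by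
            rw [hya, hy'sum]; simp [Category.assoc]
    · intro j
      dsimp only
      by_cases hj : j = a
      · subst hj; rw [if_pos rfl, Category.assoc, hyaker, comp_zero]
      · rw [if_neg hj]; exact hy'ker j
    · intro j hj
      dsimp only
      by_cases hja : j = a
      · subst hja; rw [if_pos rfl, hyaneg hj, comp_zero]
      · rw [if_neg hja]; exact hy'neg j hj

theorem wfil_elim (N : A ⟶ A) {r : ℕ} {k : ℤ} {T : C} {x : T ⟶ A}
    (h : (wfil N r k).Factors x) :
    ∃ (T' : C) (π : T' ⟶ T) (_ : Epi π) (y : ℕ → (T' ⟶ A)),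
      π ≫ x = ∑ j ∈ Finset.range r, y j ≫ endoPow N j ∧
      (∀ j : ℕ, y j ≫ endoPow N ((k + (j:ℤ)).toNat + j + 1) = 0) ∧
      (∀ j : ℕ, ¬ 0 ≤ k + (j : ℤ) → y j = 0) :=
  wsup_elim N k _ h

theorem kernelSubobject_le_of_le {f g : A ⟶ A} {T₀ : C}
    (h : ∀ (T : C) (y : T ⟶ A), y ≫ f = 0 → y ≫ g = 0) :
    kernelSubobject f ≤ kernelSubobject g := by
  apply le_of_forall_factors
  intro T y hy
  exact kernelSubobject_factors _ _ (h T y ((kernelSubobject_factors_iff f y).1 hy))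

theorem wterm_mono (N : A ⟶ A) {k k' : ℤ} (hk : k ≤ k') (j : ℕ) :
    wterm N k j ≤ wterm N k' j := by
  by_cases h : 0 ≤ k + (j:ℤ)
  · have h' : 0 ≤ k' + (j:ℤ) := by omega
    rw [wterm, if_pos h, wterm, if_pos h']
    have hker : kernelSubobject (endoPow N ((k + (j:ℤ)).toNat + j + 1)) ≤
        kernelSubobject (endoPow N ((k' + (j:ℤ)).toNat + j + 1)) := by
      apply kernelSubobject_le_of_le (T₀ := A)
      intro T y hy
      exact comp_endoPow_zero hy (by omega)
    apply le_of_forall_factors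
    intro T x hx
    obtain ⟨T', π, hπ, z, hz⟩ := factors_image_elim _ hx
    apply factors_of_epi_comp _ π
    have : π ≫ x = (z ≫ Subobject.ofLE _ _ hker) ≫
        ((kernelSubobject (endoPow N ((k' + (j:ℤ)).toNat + j + 1))).arrow ≫ endoPow N j) := by
      rw [hz]; simp [Subobject.ofLE_arrow]
    rw [this]
    exact imageSubobject_factors_comp_self _ _
  · rw [wterm, if_neg h]; exact bot_le

theorem wfil_mono (N : A ⟶ A) (r : ℕ) : Monotone (wfil N r) := by
  intro k k' hk
  exact Finset.sup_le fun j hj => le_trans (wterm_mono N hk j) (Finset.le_sup hj)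

theorem wfil_bot (N : A ⟶ A) (r : ℕ) {k : ℤ} (hk : k ≤ -(r:ℤ)) : wfil N r k = ⊥ := by
  rw [← le_bot_iff]
  apply Finset.sup_le
  intro j hj
  rw [Finset.mem_range] at hj
  rw [wterm, if_neg (by omega)]

theorem wfil_top (N : A ⟶ A) {r : ℕ} (hr1 : 1 ≤ r) (hr0 : endoPow N r = 0) {k : ℤ}
    (hk : (r:ℤ) - 1 ≤ k) : wfil N r k = ⊤ := by
  rw [← top_le_iff]
  apply le_of_forall_factors
  intro T x _
  have h0 : x ≫ endoPow N ((k + (0:ℕ)).toNat + 0 + 1) = 0 := by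
    rw [endoPow_eq_zero_of_le hr0 (by omega), comp_zero]
  have := wfil_intro N (r := r) (j := 0) (by omega) (by omega) h0 le_rfl
  simpa [endoPow] using this

theorem wfil_compat (N : A ⟶ A) {r : ℕ} (hr0 : endoPow N r = 0) (k : ℤ) :
    (wfil N r (k - 2)).Factors ((wfil N r k).arrow ≫ N) := by
  obtain ⟨T', π, hπ, y, hsum, hker, hneg⟩ := wfil_elim N ((wfil N r k).factors_self)
  apply factors_of_epi_comp _ π
  have : π ≫ (wfil N r k).arrow ≫ N = ∑ j ∈ Finset.range r, y j ≫ endoPow N (j + 1) := by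
    rw [← Category.assoc, hsum, Preadditive.sum_comp]
    exact Finset.sum_congr rfl fun j _ => by rw [Category.assoc]; rfl
  rw [this]
  apply factors_sum
  intro j hj
  rw [Finset.mem_range] at hj
  by_cases hneg' : 0 ≤ k + (j:ℤ)
  · by_cases hjr : j + 1 < r
    · by_cases hk0 : k + (j:ℤ) = 0
      · have : y j ≫ endoPow N (j + 1) = 0 := by
          have := hker j
          rwa [show ((k + (j:ℤ)).toNat + j + 1) = j + 1 by omega] at this
        rw [this]; exact Subobject.factors_zero
      · apply wfil_intro N hjr (by omega) (hker j) (by omega)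
    · rw [endoPow_eq_zero_of_le hr0 (by omega), comp_zero]
      exact Subobject.factors_zero
  · rw [hneg j hneg', zero_comp]
    exact Subobject.factors_zero

theorem wfil_surj (N : A ⟶ A) {r : ℕ} (i : ℕ) {T : C} {y : T ⟶ A}
    (hy : (wfil N r (-(i:ℤ))).Factors y) :
    ∃ (T' : C) (π : T' ⟶ T) (_ : Epi π) (x : T' ⟶ A),
      π ≫ y = x ≫ endoPow N i ∧ (wfil N r (i:ℤ)).Factors x := by
  obtain ⟨T', π, hπ, c, hsum, hker, hneg⟩ := wfil_elim N hy
  refine ⟨T', π, hπ, ∑ j ∈ Finset.range r, if (i:ℤ) ≤ (j:ℤ) then c j ≫ endoPow N (j - i) else 0,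
    ?_, ?_⟩
  · rw [hsum, Preadditive.sum_comp]
    apply Finset.sum_congr rfl
    intro j hj
    by_cases hij : (i:ℤ) ≤ (j:ℤ)
    · rw [if_pos hij, Category.assoc, ← endoPow_add, show (j - i) + i = j from by omega]
    · rw [if_neg hij, zero_comp, hneg j (by omega), zero_comp]
  · apply factors_sum
    intro j hj; rw [Finset.mem_range] at hj
    by_cases hij : (i:ℤ) ≤ (j:ℤ)
    · rw [if_pos hij]
      exact wfil_intro N (show j - i < r from by omega) (by omega) (hker j) (by omega)
    · rw [if_neg hij]; exact Subobject.factors_zero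

theorem wfil_inj (N : A ⟶ A) {r : ℕ} (hr1 : 1 ≤ r) (i : ℕ) {T : C} {x : T ⟶ A}
    (h2 : (wfil N r (-(i:ℤ) - 1)).Factors (x ≫ endoPow N i)) :
    (wfil N r ((i:ℤ) - 1)).Factors x := by
  by_cases hi : i = 0
  · subst hi
    simpa [endoPow, show (-(0:ℕ):ℤ) - 1 = ((0:ℕ):ℤ) - 1 by norm_num] using h2
  obtain ⟨T', π, hπ, c, hsum, hker, hneg⟩ := wfil_elim N h2
  set z : T' ⟶ A :=
    ∑ j ∈ Finset.range r, if (i:ℤ) + 1 ≤ (j:ℤ) then c j ≫ endoPow N (j - i) else 0 with hz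
  have hzi : z ≫ endoPow N i = π ≫ x ≫ endoPow N i := by
    rw [hsum, hz, Preadditive.sum_comp]
    apply Finset.sum_congr rfl
    intro j hj
    by_cases hij : (i:ℤ) + 1 ≤ (j:ℤ)
    · rw [if_pos hij, Category.assoc, ← endoPow_add, show (j - i) + i = j from by omega]
    · rw [if_neg hij, zero_comp, hneg j (by omega), zero_comp]
  apply factors_of_epi_comp _ π
  have hdecomp : π ≫ x = (π ≫ x - z) + z := (sub_add_cancel _ _).symm
  rw [hdecomp]
  apply Subobject.factors_add
  · have hk : (π ≫ x - z) ≫ endoPow N i = 0 := by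
      rw [Preadditive.sub_comp, Category.assoc, hzi, sub_self]
    have := wfil_intro N (r := r) (k := (i:ℤ) - 1) (j := 0) (by omega) (by omega) hk (by omega)
    simpa [endoPow] using this
  · apply factors_sum
    intro j hj; rw [Finset.mem_range] at hj
    by_cases hij : (i:ℤ) + 1 ≤ (j:ℤ)
    · rw [if_pos hij]
      exact wfil_intro N (show j - i < r from by omega) (by omega) (hker j) (by omega)
    · rw [if_neg hij]; exact Subobject.factors_zero

section Bridge

variable {N : A ⟶ A} {F : ℤ → Subobject A} {i : ℕ}

/-- The "surjectivity" condition on the filtration `F` at level `i`. -/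
def SurjCond (N : A ⟶ A) (F : ℤ → Subobject A) (i : ℕ) : Prop :=
  ∀ (T : C) (y : T ⟶ A), (F (-(i:ℤ))).Factors y →
    ∃ (T' : C) (π : T' ⟶ T) (_ : Epi π) (u v : T' ⟶ A),
      π ≫ y = u + v ≫ endoPow N i ∧ (F (-(i:ℤ) - 1)).Factors u ∧ (F (i:ℤ)).Factors v

/-- The "injectivity" condition on the filtration `F` at level `i`. -/
def InjCond (N : A ⟶ A) (F : ℤ → Subobject A) (i : ℕ) : Prop :=
  ∀ (T : C) (x : T ⟶ A), (F (i:ℤ)).Factors x → (F (-(i:ℤ) - 1)).Factors (x ≫ endoPow N i) →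
    (F ((i:ℤ) - 1)).Factors x

theorem epi_of_surjCond
    {g : ((F (i : ℤ) : C)) ⟶ ((F (-(i : ℤ)) : C))}
    (hg : g ≫ (F (-(i : ℤ))).arrow = (F (i : ℤ)).arrow ≫ endoPow N i)
    (hi' : F (-(i : ℤ) - 1) ≤ F (-(i : ℤ))) (hs : SurjCond N F i) :
    Epi (g ≫ cokernel.π (Subobject.ofLE (F (-(i : ℤ) - 1)) (F (-(i : ℤ))) hi')) := by
  rw [epi_iff_surjective_up_to_refinements]
  intro T z
  obtain ⟨T₁, π₁, hπ₁, t, ht⟩ :=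
    exists_lift_of_epi (cokernel.π (Subobject.ofLE (F (-(i : ℤ) - 1)) (F (-(i : ℤ))) hi')) z
  obtain ⟨T₂, π₂, hπ₂, u, v, huv, hu, hv⟩ := hs _ (t ≫ (F (-(i:ℤ))).arrow)
    (Subobject.factors_comp_arrow t)
  have key : π₂ ≫ t = ((F (-(i:ℤ) - 1)).factorThru u hu) ≫
      Subobject.ofLE (F (-(i : ℤ) - 1)) (F (-(i : ℤ))) hi' + ((F (i:ℤ)).factorThru v hv) ≫ g := by
    rw [← cancel_mono (F (-(i:ℤ))).arrow]
    simp only [Preadditive.add_comp, Category.assoc, Subobject.ofLE_arrow,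
      Subobject.factorThru_arrow, hg, Subobject.factorThru_arrow_assoc]
    simpa [Category.assoc] using huv
  refine ⟨T₂, π₂ ≫ π₁, inferInstance, (F (i:ℤ)).factorThru v hv, ?_⟩
  rw [Category.assoc, ← ht, ← Category.assoc, key]
  simp [Preadditive.add_comp, Category.assoc, cokernel.condition]

theorem mono_of_injCond
    {g : ((F (i : ℤ) : C)) ⟶ ((F (-(i : ℤ)) : C))}
    (hg : g ≫ (F (-(i : ℤ))).arrow = (F (i : ℤ)).arrow ≫ endoPow N i)
    (hi : F ((i : ℤ) - 1) ≤ F (i : ℤ)) (hi' : F (-(i : ℤ) - 1) ≤ F (-(i : ℤ)))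
    (w : Subobject.ofLE (F ((i : ℤ) - 1)) (F (i : ℤ)) hi ≫
      (g ≫ cokernel.π (Subobject.ofLE (F (-(i : ℤ) - 1)) (F (-(i : ℤ))) hi')) = 0)
    (hinj : InjCond N F i) :
    Mono (cokernel.desc (Subobject.ofLE (F ((i : ℤ) - 1)) (F (i : ℤ)) hi)
      (g ≫ cokernel.π (Subobject.ofLE (F (-(i : ℤ) - 1)) (F (-(i : ℤ))) hi')) w) := by
  rw [Preadditive.mono_iff_cancel_zero]
  intro T t ht
  obtain ⟨T₁, π₁, hπ₁, s, hs⟩ :=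
    exists_lift_of_epi (cokernel.π (Subobject.ofLE (F ((i : ℤ) - 1)) (F (i : ℤ)) hi)) t
  have hsz : (s ≫ g) ≫ cokernel.π (Subobject.ofLE (F (-(i : ℤ) - 1)) (F (-(i : ℤ))) hi') = 0 := by
    have := hs =≫ (cokernel.desc (Subobject.ofLE (F ((i : ℤ) - 1)) (F (i : ℤ)) hi)
      (g ≫ cokernel.π (Subobject.ofLE (F (-(i : ℤ) - 1)) (F (-(i : ℤ))) hi')) w)
    rw [Category.assoc, cokernel.π_desc, Category.assoc, ht, comp_zero] at this
    rw [Category.assoc, this]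
  obtain ⟨T₂, π₂, hπ₂, w₂, hw₂⟩ := comp_cokernelπ_eq_zero_elim hsz
  have hx1 : (F (i:ℤ)).Factors ((π₂ ≫ s) ≫ (F (i:ℤ)).arrow) := Subobject.factors_comp_arrow _
  have hx2 : (F (-(i:ℤ) - 1)).Factors (((π₂ ≫ s) ≫ (F (i:ℤ)).arrow) ≫ endoPow N i) := by
    have h1 : ((π₂ ≫ s) ≫ (F (i:ℤ)).arrow) ≫ endoPow N i = w₂ ≫ (F (-(i:ℤ) - 1)).arrow :=
      calc ((π₂ ≫ s) ≫ (F (i:ℤ)).arrow) ≫ endoPow N i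
          = π₂ ≫ s ≫ ((F (i:ℤ)).arrow ≫ endoPow N i) := by simp [Category.assoc]
        _ = π₂ ≫ s ≫ (g ≫ (F (-(i:ℤ))).arrow) := by rw [hg]
        _ = (π₂ ≫ s ≫ g) ≫ (F (-(i:ℤ))).arrow := by simp [Category.assoc]
        _ = (w₂ ≫ Subobject.ofLE (F (-(i : ℤ) - 1)) (F (-(i : ℤ))) hi') ≫
              (F (-(i:ℤ))).arrow := by rw [hw₂]
        _ = w₂ ≫ (F (-(i:ℤ) - 1)).arrow := by simp
    rw [h1]
    exact Subobject.factors_comp_arrow _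
  have hfac := hinj _ _ hx1 hx2
  have key : π₂ ≫ s = (F ((i:ℤ) - 1)).factorThru _ hfac ≫
      Subobject.ofLE (F ((i : ℤ) - 1)) (F (i : ℤ)) hi := by
    apply (cancel_mono ((F (i:ℤ)).arrow)).1
    simp
  have hzero : (π₂ ≫ π₁) ≫ t = 0 := by
    rw [Category.assoc, ← hs, ← Category.assoc, key, Category.assoc, cokernel.condition,
      comp_zero]
  rwa [← cancel_epi (π₂ ≫ π₁), comp_zero]

theorem isIso_desc_of_conds
    {g : ((F (i : ℤ) : C)) ⟶ ((F (-(i : ℤ)) : C))}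
    (hg : g ≫ (F (-(i : ℤ))).arrow = (F (i : ℤ)).arrow ≫ endoPow N i)
    (hi : F ((i : ℤ) - 1) ≤ F (i : ℤ)) (hi' : F (-(i : ℤ) - 1) ≤ F (-(i : ℤ)))
    (w : Subobject.ofLE (F ((i : ℤ) - 1)) (F (i : ℤ)) hi ≫
      (g ≫ cokernel.π (Subobject.ofLE (F (-(i : ℤ) - 1)) (F (-(i : ℤ))) hi')) = 0)
    (hs : SurjCond N F i) (hinj : InjCond N F i) :
    IsIso (cokernel.desc (Subobject.ofLE (F ((i : ℤ) - 1)) (F (i : ℤ)) hi)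
      (g ≫ cokernel.π (Subobject.ofLE (F (-(i : ℤ) - 1)) (F (-(i : ℤ))) hi')) w) := by
  have hm : Mono _ := mono_of_injCond hg hi hi' w hinj
  have he : Epi (g ≫ cokernel.π (Subobject.ofLE (F (-(i : ℤ) - 1)) (F (-(i : ℤ))) hi')) :=
    epi_of_surjCond hg hi' hs
  haveI he' := he
  have : Epi (cokernel.desc (Subobject.ofLE (F ((i : ℤ) - 1)) (F (i : ℤ)) hi)
      (g ≫ cokernel.π (Subobject.ofLE (F (-(i : ℤ) - 1)) (F (-(i : ℤ))) hi')) w) :=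
    epi_of_epi_fac (cokernel.π_desc _ _ _)
  exact isIso_of_mono_of_epi _

theorem surjCond_of_isIso
    {g : ((F (i : ℤ) : C)) ⟶ ((F (-(i : ℤ)) : C))}
    (hg : g ≫ (F (-(i : ℤ))).arrow = (F (i : ℤ)).arrow ≫ endoPow N i)
    (hi : F ((i : ℤ) - 1) ≤ F (i : ℤ)) (hi' : F (-(i : ℤ) - 1) ≤ F (-(i : ℤ)))
    (w : Subobject.ofLE (F ((i : ℤ) - 1)) (F (i : ℤ)) hi ≫
      (g ≫ cokernel.π (Subobject.ofLE (F (-(i : ℤ) - 1)) (F (-(i : ℤ))) hi')) = 0)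
    (hiso : IsIso (cokernel.desc (Subobject.ofLE (F ((i : ℤ) - 1)) (F (i : ℤ)) hi)
      (g ≫ cokernel.π (Subobject.ofLE (F (-(i : ℤ) - 1)) (F (-(i : ℤ))) hi')) w)) :
    SurjCond N F i := by
  have he : Epi (g ≫ cokernel.π (Subobject.ofLE (F (-(i : ℤ) - 1)) (F (-(i : ℤ))) hi')) := by
    rw [← cokernel.π_desc (Subobject.ofLE (F ((i : ℤ) - 1)) (F (i : ℤ)) hi)
      (g ≫ cokernel.π (Subobject.ofLE (F (-(i : ℤ) - 1)) (F (-(i : ℤ))) hi')) w]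
    exact epi_comp _ _
  intro T y hy
  obtain ⟨T₁, π₁, hπ₁, s, hs⟩ := surjective_up_to_refinements_of_epi
    (g ≫ cokernel.π (Subobject.ofLE (F (-(i : ℤ) - 1)) (F (-(i : ℤ))) hi'))
    ((F (-(i:ℤ))).factorThru y hy ≫
      cokernel.π (Subobject.ofLE (F (-(i : ℤ) - 1)) (F (-(i : ℤ))) hi'))
  have hz : ((π₁ ≫ (F (-(i:ℤ))).factorThru y hy) - s ≫ g) ≫
      cokernel.π (Subobject.ofLE (F (-(i : ℤ) - 1)) (F (-(i : ℤ))) hi') = 0 := by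
    rw [Preadditive.sub_comp, Category.assoc, Category.assoc, ← hs, ← Category.assoc, sub_self]
  obtain ⟨T₂, π₂, hπ₂, w₂, hw₂⟩ := comp_cokernelπ_eq_zero_elim hz
  refine ⟨T₂, π₂ ≫ π₁, inferInstance, w₂ ≫ (F (-(i:ℤ) - 1)).arrow,
    (π₂ ≫ s) ≫ (F (i:ℤ)).arrow, ?_, Subobject.factors_comp_arrow _,
    Subobject.factors_comp_arrow _⟩
  have expand : π₂ ≫ π₁ ≫ (F (-(i:ℤ))).factorThru y hy =
      w₂ ≫ Subobject.ofLE (F (-(i : ℤ) - 1)) (F (-(i : ℤ))) hi' + π₂ ≫ s ≫ g := by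
    rw [Preadditive.comp_sub] at hw₂
    exact eq_add_of_sub_eq hw₂
  calc (π₂ ≫ π₁) ≫ y
      = (π₂ ≫ π₁ ≫ (F (-(i:ℤ))).factorThru y hy) ≫ (F (-(i:ℤ))).arrow := by
        simp [Category.assoc]
    _ = w₂ ≫ (F (-(i:ℤ) - 1)).arrow + ((π₂ ≫ s) ≫ (F (i:ℤ)).arrow) ≫ endoPow N i := by
        rw [expand]
        simp [Preadditive.add_comp, Category.assoc, hg]

theorem injCond_of_isIso
    {g : ((F (i : ℤ) : C)) ⟶ ((F (-(i : ℤ)) : C))}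
    (hg : g ≫ (F (-(i : ℤ))).arrow = (F (i : ℤ)).arrow ≫ endoPow N i)
    (hi : F ((i : ℤ) - 1) ≤ F (i : ℤ)) (hi' : F (-(i : ℤ) - 1) ≤ F (-(i : ℤ)))
    (w : Subobject.ofLE (F ((i : ℤ) - 1)) (F (i : ℤ)) hi ≫
      (g ≫ cokernel.π (Subobject.ofLE (F (-(i : ℤ) - 1)) (F (-(i : ℤ))) hi')) = 0)
    (hiso : IsIso (cokernel.desc (Subobject.ofLE (F ((i : ℤ) - 1)) (F (i : ℤ)) hi)
      (g ≫ cokernel.π (Subobject.ofLE (F (-(i : ℤ) - 1)) (F (-(i : ℤ))) hi')) w)) :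
    InjCond N F i := by
  intro T x hx hx'
  have hsg' : (F (i:ℤ)).factorThru x hx ≫ g =
      (F (-(i:ℤ) - 1)).factorThru _ hx' ≫
        Subobject.ofLE (F (-(i : ℤ) - 1)) (F (-(i : ℤ))) hi' := by
    apply (cancel_mono ((F (-(i:ℤ))).arrow)).1
    simp [Category.assoc, hg]
  have hcomp : ((F (i:ℤ)).factorThru x hx ≫
      cokernel.π (Subobject.ofLE (F ((i : ℤ) - 1)) (F (i : ℤ)) hi)) ≫
      (cokernel.desc (Subobject.ofLE (F ((i : ℤ) - 1)) (F (i : ℤ)) hi)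
        (g ≫ cokernel.π (Subobject.ofLE (F (-(i : ℤ) - 1)) (F (-(i : ℤ))) hi')) w) = 0 := by
    rw [Category.assoc, cokernel.π_desc, ← Category.assoc, hsg', Category.assoc,
      cokernel.condition, comp_zero]
  have : Mono (cokernel.desc (Subobject.ofLE (F ((i : ℤ) - 1)) (F (i : ℤ)) hi)
      (g ≫ cokernel.π (Subobject.ofLE (F (-(i : ℤ) - 1)) (F (-(i : ℤ))) hi')) w) := inferInstance
  have hzero : (F (i:ℤ)).factorThru x hx ≫
      cokernel.π (Subobject.ofLE (F ((i : ℤ) - 1)) (F (i : ℤ)) hi) = 0 :=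
    zero_of_comp_mono _ hcomp
  obtain ⟨T₂, π₂, hπ₂, q, hq⟩ := comp_cokernelπ_eq_zero_elim hzero
  apply factors_of_epi_comp _ π₂
  have hpx : π₂ ≫ x = q ≫ (F ((i:ℤ) - 1)).arrow := by
    have h0 : π₂ ≫ x = (π₂ ≫ (F (i:ℤ)).factorThru x hx) ≫ (F (i:ℤ)).arrow := by simp
    rw [h0, hq]
    simp
  rw [hpx]
  exact Subobject.factors_comp_arrow _

theorem compat_step {N : A ⟶ A} {F : ℤ → Subobject A}
    (hc : ∀ k : ℤ, (F (k - 2)).Factors ((F k).arrow ≫ N)) {k : ℤ} {T : C} {x : T ⟶ A}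
    (h : (F k).Factors x) : (F (k - 2)).Factors (x ≫ N) := by
  have h1 := Subobject.factors_of_factors_right ((F k).factorThru x h) (hc k)
  have e : (F k).factorThru x h ≫ (F k).arrow ≫ N = x ≫ N := by
    rw [← Category.assoc, Subobject.factorThru_arrow]
  rwa [e] at h1

theorem compat_pow {N : A ⟶ A} {F : ℤ → Subobject A}
    (hc : ∀ k : ℤ, (F (k - 2)).Factors ((F k).arrow ≫ N)) (j : ℕ) {k : ℤ} {T : C} {x : T ⟶ A}
    (h : (F k).Factors x) : (F (k - 2 * (j:ℤ))).Factors (x ≫ endoPow N j) := by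
  induction j with
  | zero =>
    have e : k - 2 * ((0:ℕ):ℤ) = k := by push_cast; ring
    rw [e]
    simpa [endoPow] using h
  | succ j ih =>
    have h2 := compat_step hc ih
    have e : k - 2 * ((j:ℤ)) - 2 = k - 2 * (((j+1:ℕ)):ℤ) := by push_cast; ring
    rw [e] at h2
    have e2 : (x ≫ endoPow N j) ≫ N = x ≫ endoPow N (j + 1) := by
      rw [Category.assoc]; rfl
    rwa [e2] at h2

theorem ker_le_general {N : A ⟶ A} {F : ℤ → Subobject A}
    (hinj : ∀ i : ℕ, InjCond N F i) {b : ℤ} (hb : ∀ i ≥ b, F i = ⊤) {m : ℕ} (hm : 1 ≤ m)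
    {T : C} {x : T ⟶ A} (hx : x ≫ endoPow N m = 0) : (F ((m:ℤ) - 1)).Factors x := by
  have H : ∀ n : ℕ, (F ((m:ℤ) - 1 + n)).Factors x → (F ((m:ℤ) - 1)).Factors x := by
    intro n
    induction n with
    | zero => intro h; simpa using h
    | succ n ih =>
      intro h
      apply ih
      have hx1 : (F (((m + n : ℕ)):ℤ)).Factors x := by
        have e : (((m + n : ℕ)):ℤ) = (m:ℤ) - 1 + ((n+1 : ℕ):ℤ) := by push_cast; ring
        rw [e]; exact h
      have hx2 : (F (-((m + n : ℕ):ℤ) - 1)).Factors (x ≫ endoPow N (m + n)) := by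
        rw [comp_endoPow_zero hx (by omega)]
        exact Subobject.factors_zero
      have h2 := hinj (m + n) _ x hx1 hx2
      have e2 : (((m + n:ℕ)):ℤ) - 1 = (m:ℤ) - 1 + (n:ℤ) := by push_cast; ring
      rwa [e2] at h2
  apply H (b - m + 1).toNat
  rw [hb _ (by omega)]
  exact Subobject.top_factors x

theorem wfil_le_of_monodromy {N : A ⟶ A} {r : ℕ} (hr1 : 1 ≤ r) {F : ℤ → Subobject A}
    (hc : ∀ k : ℤ, (F (k - 2)).Factors ((F k).arrow ≫ N))
    (hinj : ∀ i : ℕ, InjCond N F i) {b : ℤ} (hb : ∀ i ≥ b, F i = ⊤) (k : ℤ) :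
    wfil N r k ≤ F k := by
  apply le_of_forall_factors
  intro T x hx
  obtain ⟨T', π, hπ, y, hsum, hker, hneg⟩ := wfil_elim N hx
  apply factors_of_epi_comp _ π
  rw [hsum]
  apply factors_sum
  intro j hj
  by_cases h0 : 0 ≤ k + (j:ℤ)
  · have h1 := ker_le_general hinj hb (m := (k + (j:ℤ)).toNat + j + 1) (by omega) (hker j)
    have h2 := compat_pow hc j h1
    have e : ((((k + (j:ℤ)).toNat + j + 1 : ℕ)):ℤ) - 1 - 2 * (j:ℤ) = k := by
      push_cast; omega
    rwa [e] at h2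
  · rw [hneg j h0, zero_comp]
    exact Subobject.factors_zero

theorem le_wfil_of_monodromy {N : A ⟶ A} {r : ℕ} (hr1 : 1 ≤ r) (hr0 : endoPow N r = 0)
    {F : ℤ → Subobject A}
    (hc : ∀ k : ℤ, (F (k - 2)).Factors ((F k).arrow ≫ N))
    (hsurj : ∀ i : ℕ, SurjCond N F i) {a : ℤ} (ha : ∀ i ≤ a, F i = ⊥) (k : ℤ) :
    F k ≤ wfil N r k := by
  set B : ℤ := max (max (r:ℤ) (-a + 1)) 1 with hB
  have hBr : (r:ℤ) ≤ B := le_trans (le_max_left _ _) (le_max_left _ _)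
  have hBa : -a + 1 ≤ B := le_trans (le_max_right _ _) (le_max_left _ _)
  have main : ∀ n : ℕ, ∀ k : ℤ,
      ((2*B+1) - (if 0 ≤ k then 2*k+1 else -2*k)).toNat ≤ n → F k ≤ wfil N r k := by
    intro n
    induction n with
    | zero =>
      intro k hk
      by_cases h0 : 0 ≤ k
      · rw [if_pos h0] at hk
        rw [wfil_top N hr1 hr0 (by omega)]
        exact le_top
      · rw [if_neg h0] at hk
        rw [ha k (by omega)]
        exact bot_le
    | succ n ih =>
      intro k hk
      by_cases h0 : 0 ≤ k
      · rw [if_pos h0] at hk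
        by_cases hkr : (r:ℤ) - 1 ≤ k
        · rw [wfil_top N hr1 hr0 hkr]
          exact le_top
        · -- k ≥ 0, k < r - 1
          set i : ℕ := k.toNat with hi
          have hik : (i:ℤ) = k := by omega
          apply le_of_forall_factors
          intro T x hx
          have h2 := compat_pow hc (i+1) hx
          have hdep : F (k - 2 * ((i+1:ℕ):ℤ)) ≤ wfil N r (k - 2 * ((i+1:ℕ):ℤ)) := by
            apply ih
            rw [if_neg (by push_cast; omega)]
            omega
          have h3 := Subobject.factors_of_le _ hdep h2
          have e : k - 2 * ((i+1:ℕ):ℤ) = -((i+1:ℕ):ℤ) - 1 := by push_cast; omega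
          rw [e] at h3
          have h4 := wfil_inj N hr1 (i+1) h3
          have e2 : ((i+1:ℕ):ℤ) - 1 = k := by push_cast; omega
          rwa [e2] at h4
      · rw [if_neg h0] at hk
        by_cases hka : k ≤ a
        · rw [ha k hka]
          exact bot_le
        · -- a < k < 0
          set i : ℕ := (-k).toNat with hi
          have hik : -(i:ℤ) = k := by omega
          have hi1 : 1 ≤ i := by omega
          apply le_of_forall_factors
          intro T x hx
          have hx' : (F (-(i:ℤ))).Factors x := by rw [hik]; exact hx
          obtain ⟨T', π, hπ, u, v, huv, hu, hv⟩ := hsurj i T x hx'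
          apply factors_of_epi_comp _ π
          rw [huv]
          apply Subobject.factors_add
          · have hdep : F (-(i:ℤ) - 1) ≤ wfil N r (-(i:ℤ) - 1) := by
              apply ih
              rw [if_neg (by omega)]
              omega
            have h5 := Subobject.factors_of_le _ hdep hu
            exact Subobject.factors_of_le _ (wfil_mono N r (by omega)) h5
          · have hdep : F ((i:ℤ)) ≤ wfil N r ((i:ℤ)) := by
              apply ih
              rw [if_pos (by omega)]
              omega
            have h5 := Subobject.factors_of_le _ hdep hv
            have h6 := compat_pow (fun k => wfil_compat N hr0 k) i h5
            have e : (i:ℤ) - 2 * (i:ℤ) = -(i:ℤ) := by ring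
            rw [e, hik] at h6
            exact h6
  exact main ((2*B+1) - (if 0 ≤ k then 2*k+1 else -2*k)).toNat k le_rfl

end Bridge

end MonodromyAux

/-- (Lemma 7.2, existence and uniqueness of the monodromy filtration.)
Let `𝒜` be an abelian category, `A` an object and `N : A ⟶ A` a nilpotent endomorphism.
Then there is a unique finite increasing filtration of `A` compatible with `N` such that
for every `i ≥ 0` the morphism `Gr_i A ⟶ Gr_{-i} A` induced by `N^i` is an isomorphism. -/
theorem monodromy_filtration_existsUnique {C : Type*} [Category C] [Abelian C] {A : C}
    (N : A ⟶ A) (hN : ∃ r : ℕ, 1 ≤ r ∧ endoPow N r = 0) :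
    ∃! F : ℤ → Subobject A, IsMonodromyFiltration N F := by
  classical
  obtain ⟨r, hr1, hr0⟩ := hN
  refine ⟨MonodromyAux.wfil N r, ⟨?_, ?_, ?_⟩, ?_⟩
  · exact ⟨MonodromyAux.wfil_mono N r, ⟨-(r:ℤ), fun i hi => MonodromyAux.wfil_bot N r hi⟩,
      ⟨(r:ℤ) - 1, fun i hi => MonodromyAux.wfil_top N hr1 hr0 hi⟩⟩
  · exact fun k => MonodromyAux.wfil_compat N hr0 k
  · intro i g hg hi hi' w
    have hsurjW : MonodromyAux.SurjCond N (MonodromyAux.wfil N r) i := by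
      intro T y hy
      obtain ⟨T', π, hπ, x, hxy, hxF⟩ := MonodromyAux.wfil_surj N i hy
      exact ⟨T', π, hπ, 0, x, by rw [zero_add]; exact hxy, Subobject.factors_zero, hxF⟩
    have hinjW : MonodromyAux.InjCond N (MonodromyAux.wfil N r) i :=
      fun T x _ h2 => MonodromyAux.wfil_inj N hr1 i h2
    exact MonodromyAux.isIso_desc_of_conds hg hi hi' w hsurjW hinjW
  · rintro F' ⟨⟨hmono, ⟨a, ha⟩, ⟨b, hb⟩⟩, hc, hiso⟩
    -- extract the surjectivity/injectivity conditions from the isomorphism conditions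
    have conds : ∀ i : ℕ, MonodromyAux.SurjCond N F' i ∧ MonodromyAux.InjCond N F' i := by
      intro i
      have hgfac : (F' (-(i:ℤ))).Factors ((F' (i:ℤ)).arrow ≫ endoPow N i) := by
        have h1 := MonodromyAux.compat_pow hc i (F' (i:ℤ)).factors_self
        have e : (i:ℤ) - 2 * (i:ℤ) = -(i:ℤ) := by ring
        rwa [e] at h1
      set g : ((F' (i : ℤ) : C)) ⟶ ((F' (-(i : ℤ)) : C)) := (F' (-(i:ℤ))).factorThru _ hgfac
        with hgdef
      have hg : g ≫ (F' (-(i : ℤ))).arrow = (F' (i : ℤ)).arrow ≫ endoPow N i :=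
        Subobject.factorThru_arrow _ _ _
      have hi : F' ((i : ℤ) - 1) ≤ F' (i : ℤ) := hmono (by omega)
      have hi' : F' (-(i : ℤ) - 1) ≤ F' (-(i : ℤ)) := hmono (by omega)
      have h₂ : (F' (-(i:ℤ) - 1)).Factors ((F' ((i:ℤ) - 1)).arrow ≫ endoPow N i) := by
        have h1 := MonodromyAux.compat_pow hc i (F' ((i:ℤ) - 1)).factors_self
        have e : (i:ℤ) - 1 - 2 * (i:ℤ) = -(i:ℤ) - 1 := by ring
        rwa [e] at h1
      have key : Subobject.ofLE (F' ((i : ℤ) - 1)) (F' (i : ℤ)) hi ≫ g =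
          (F' (-(i:ℤ) - 1)).factorThru _ h₂ ≫
            Subobject.ofLE (F' (-(i : ℤ) - 1)) (F' (-(i : ℤ))) hi' := by
        apply (cancel_mono ((F' (-(i:ℤ))).arrow)).1
        simp [hg]
      have w : Subobject.ofLE (F' ((i : ℤ) - 1)) (F' (i : ℤ)) hi ≫
          (g ≫ cokernel.π (Subobject.ofLE (F' (-(i : ℤ) - 1)) (F' (-(i : ℤ))) hi')) = 0 := by
        rw [← Category.assoc, key, Category.assoc, cokernel.condition, comp_zero]
      have hiso_i := hiso i g hg hi hi' w
      exact ⟨MonodromyAux.surjCond_of_isIso hg hi hi' w hiso_i,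
        MonodromyAux.injCond_of_isIso hg hi hi' w hiso_i⟩
    funext k
    apply le_antisymm
    · exact MonodromyAux.le_wfil_of_monodromy hr1 hr0 hc (fun i => (conds i).1) ha k
    · exact MonodromyAux.wfil_le_of_monodromy hr1 hc (fun i => (conds i).2) hb k
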